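/- arXiv:2201.03284 — 3 statements merged into one kernel-verified Lean document; each statement's English description precedes it below -/
import Mathlib

section
/- Let p, q, p', q' ∈ R. Then there is an isomorphism of matrix factorisations [p, q] ⊗ [p', q'] ≅ [p + p', q] ⊗ [p', q' − q] of pq + p'q'. -/
open TensorProduct

noncomputable section

variable {R : Type*} [CommRing R]

section TensorDiff

variable {X0 X1 Y0 Y1 : Type*}
variable [AddCommGroup X0] [AddCommGroup X1] [AddCommGroup Y0] [AddCommGroup Y1]
variable [Module R X0] [Module R X1] [Module R Y0] [Module R Y1]

/-- Even-to-odd component of `d_X ⊗ 1 + 1 ⊗ d_Y` (Koszul signs) on the graded tensor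
product of two matrix factorisations. -/
def tensorD0 (d0 : X0 →ₗ[R] X1) (d1 : X1 →ₗ[R] X0)
    (e0 : Y0 →ₗ[R] Y1) (e1 : Y1 →ₗ[R] Y0) :
    (X0 ⊗[R] Y0) × (X1 ⊗[R] Y1) →ₗ[R] (X0 ⊗[R] Y1) × (X1 ⊗[R] Y0) :=
  LinearMap.coprod
    (LinearMap.prod (LinearMap.lTensor X0 e0) (LinearMap.rTensor Y0 d0))
    (LinearMap.prod (LinearMap.rTensor Y1 d1) (-(LinearMap.lTensor X1 e1)))

/-- Odd-to-even component of `d_X ⊗ 1 + 1 ⊗ d_Y` on `X ⊗ Y`. -/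
def tensorD1 (d0 : X0 →ₗ[R] X1) (d1 : X1 →ₗ[R] X0)
    (e0 : Y0 →ₗ[R] Y1) (e1 : Y1 →ₗ[R] Y0) :
    (X0 ⊗[R] Y1) × (X1 ⊗[R] Y0) →ₗ[R] (X0 ⊗[R] Y0) × (X1 ⊗[R] Y1) :=
  LinearMap.coprod
    (LinearMap.prod (LinearMap.lTensor X0 e1) (LinearMap.rTensor Y1 d0))
    (LinearMap.prod (LinearMap.rTensor Y0 d1) (-(LinearMap.lTensor X1 e0)))

end TensorDiff

/-- An isomorphism of matrix factorisations: an even linear isomorphism intertwining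
the differentials, given by its components on the graded pieces. -/
def MFIso {A0 A1 B0 B1 : Type*}
    [AddCommGroup A0] [AddCommGroup A1] [AddCommGroup B0] [AddCommGroup B1]
    [Module R A0] [Module R A1] [Module R B0] [Module R B1]
    (dA0 : A0 →ₗ[R] A1) (dA1 : A1 →ₗ[R] A0)
    (dB0 : B0 →ₗ[R] B1) (dB1 : B1 →ₗ[R] B0) : Prop :=
  ∃ (φ0 : A0 ≃ₗ[R] B0) (φ1 : A1 ≃ₗ[R] B1),
    (φ1 : A1 →ₗ[R] B1) ∘ₗ dA0 = dB0 ∘ₗ (φ0 : A0 →ₗ[R] B0) ∧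
    (φ0 : A0 →ₗ[R] B0) ∘ₗ dA1 = dB1 ∘ₗ (φ1 : A1 →ₗ[R] B1)

/-- The rank-1 Koszul matrix factorisation `[p,q]` of `pq` has both graded pieces
equal to `R` and differential components `p • id` and `q • id`. -/
def smulId (R : Type*) [CommRing R] (r : R) : R →ₗ[R] R := r • LinearMap.id

section KoszulTensor

variable {M N : Type*} [AddCommGroup M] [AddCommGroup N] [Module R M] [Module R N]

theorem tensorD0_smul_id_apply (p q p' q' : R) (x : (M ⊗[R] N) × (M ⊗[R] N)) :
    tensorD0 (p • LinearMap.id) (q • LinearMap.id) (p' • LinearMap.id) (q' • LinearMap.id) x =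
      (p' • x.1 + q • x.2, p • x.1 - q' • x.2) := by
  simp [tensorD0, sub_eq_add_neg]

theorem tensorD1_smul_id_apply (p q p' q' : R) (x : (M ⊗[R] N) × (M ⊗[R] N)) :
    tensorD1 (p • LinearMap.id) (q • LinearMap.id) (p' • LinearMap.id) (q' • LinearMap.id) x =
      (q' • x.1 + q • x.2, p • x.1 - p' • x.2) := by
  simp [tensorD1, sub_eq_add_neg]

/-- The differentials are the scalar matrices `!![p', q; p, -q']` and `!![q', q; p, -p']`; the
matrix `T` is the identity on the even part and the shear `(x, y) ↦ (x, x + y)` on the odd part,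
i.e. adding the first row of the first matrix to its second and subtracting the second column of
the second matrix from its first. -/
theorem mfIso_koszul_tensor_row_addition (p q p' q' : R) :
    MFIso (R := R)
      (tensorD0 (p • LinearMap.id : M →ₗ[R] M) (q • LinearMap.id)
        (p' • LinearMap.id : N →ₗ[R] N) (q' • LinearMap.id))
      (tensorD1 (p • LinearMap.id : M →ₗ[R] M) (q • LinearMap.id)
        (p' • LinearMap.id : N →ₗ[R] N) (q' • LinearMap.id))
      (tensorD0 ((p + p') • LinearMap.id : M →ₗ[R] M) (q • LinearMap.id)
        (p' • LinearMap.id : N →ₗ[R] N) ((q' - q) • LinearMap.id))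
      (tensorD1 ((p + p') • LinearMap.id : M →ₗ[R] M) (q • LinearMap.id)
        (p' • LinearMap.id : N →ₗ[R] N) ((q' - q) • LinearMap.id)) := by
  let shear := (LinearEquiv.refl R (M ⊗[R] N)).skewProd (.refl R _) LinearMap.id
  refine ⟨.refl R _, shear, LinearMap.ext fun x => Prod.ext ?_ ?_,
    LinearMap.ext fun x => Prod.ext ?_ ?_⟩ <;>
    simp only [LinearMap.comp_apply, LinearEquiv.coe_coe, LinearEquiv.refl_apply, shear,
      LinearEquiv.skewProd_apply, LinearMap.id_apply, tensorD0_smul_id_apply,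
      tensorD1_smul_id_apply] <;>
    module

end KoszulTensor

/-- `[p, q] ⊗ [p', q'] ≅ [p + p', q] ⊗ [p', q' − q]` as matrix factorisations
of `pq + p'q'`. -/
theorem koszul_row_addition (p q p' q' : R) :
    MFIso (R := R)
      (tensorD0 (smulId R p) (smulId R q) (smulId R p') (smulId R q'))
      (tensorD1 (smulId R p) (smulId R q) (smulId R p') (smulId R q'))
      (tensorD0 (smulId R (p + p')) (smulId R q) (smulId R p') (smulId R (q' - q)))
      (tensorD1 (smulId R (p + p')) (smulId R q) (smulId R p') (smulId R (q' - q))) :=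
  mfIso_koszul_tensor_row_addition (M := R) (N := R) p q p' q'

end
end

section
/- Let p, q, p', q' ∈ R. Then there is an isomorphism of matrix factorisations [p, q] ⊗ [p', q'] ≅ [p − p', q] ⊗ [p', q' + q]. -/
/-!
The differential of `[p, q] ⊗ [p', q']` from even to odd part is the matrix `(p', q; p, -q')`
acting on `(R ⊗ R)²`. Subtracting its first row from its second, i.e. composing with the shear
`(u, v) ↦ (u, v - u)` on the odd part, gives `(p', q; p - p', -(q' + q))`, the differential of
`[p - p', q] ⊗ [p', q' + q]`; the odd-to-even differentials then match after the inverse column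
operation. So the identity on the even part and the shear on the odd part form the isomorphism.
-/

open TensorProduct

noncomputable section

variable {R : Type*} [CommRing R]

theorem lTensor_smulId (M : Type*) [AddCommGroup M] [Module R M] (r : R) :
    (smulId R r).lTensor M = r • LinearMap.id := by
  rw [smulId, LinearMap.lTensor_smul, LinearMap.lTensor_id]

theorem rTensor_smulId (M : Type*) [AddCommGroup M] [Module R M] (r : R) :
    (smulId R r).rTensor M = r • LinearMap.id := by
  rw [smulId, LinearMap.rTensor_smul, LinearMap.rTensor_id]

theorem tensorD0_smulId_apply (p q p' q' : R) (x : (R ⊗[R] R) × (R ⊗[R] R)) :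
    tensorD0 (smulId R p) (smulId R q) (smulId R p') (smulId R q') x =
      (p' • x.1 + q • x.2, p • x.1 - q' • x.2) := by
  simp [tensorD0, lTensor_smulId, rTensor_smulId, sub_eq_add_neg]

theorem tensorD1_smulId_apply (p q p' q' : R) (x : (R ⊗[R] R) × (R ⊗[R] R)) :
    tensorD1 (smulId R p) (smulId R q) (smulId R p') (smulId R q') x =
      (q' • x.1 + q • x.2, p • x.1 - p' • x.2) := by
  simp [tensorD1, lTensor_smulId, rTensor_smulId, sub_eq_add_neg]

/-- `[p, q] ⊗ [p', q'] ≅ [p − p', q] ⊗ [p', q' + q]` as matrix factorisations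
of `pq + p'q'`. -/
theorem koszul_row_subtraction (p q p' q' : R) :
    MFIso (R := R)
      (tensorD0 (smulId R p) (smulId R q) (smulId R p') (smulId R q'))
      (tensorD1 (smulId R p) (smulId R q) (smulId R p') (smulId R q'))
      (tensorD0 (smulId R (p - p')) (smulId R q) (smulId R p') (smulId R (q' + q)))
      (tensorD1 (smulId R (p - p')) (smulId R q) (smulId R p') (smulId R (q' + q))) := by
  refine ⟨LinearEquiv.refl R _,
    (LinearEquiv.refl R _).skewProd (LinearEquiv.refl R _) (-LinearMap.id),
    LinearMap.ext fun x => ?_, LinearMap.ext fun x => ?_⟩ <;>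
    refine Prod.ext ?_ ?_ <;>
    simp only [LinearMap.comp_apply, LinearEquiv.coe_coe, LinearEquiv.refl_apply,
      LinearEquiv.skewProd_apply, LinearMap.neg_apply, LinearMap.id_apply,
      tensorD0_smulId_apply, tensorD1_smulId_apply] <;>
    module

end
end

section
/- Let R = ℂ[x,x',a] and consider the quadratic polynomial W = a·(x'−x) (sum over i of aᵢ(xᵢ'−xᵢ)). The composite of the 1-morphisms corresponding to adding four copies of such quadratic superpotentials in a chain x⁽¹⁾→x⁽²⁾→⋯→x⁽⁵⁾ with intermediate variables integrated out, namely the polynomial a⁽¹⁾·(x⁽²⁾−x⁽¹⁾) + a⁽²⁾·(x⁽⁴⁾−x⁽³⁾) + a⁽³⁾·(x⁽⁵⁾−x⁽⁴⁾) + a⁽⁴⁾·(x⁽³⁾−x⁽²⁾), is, after successively eliminating the variables x⁽²⁾, x⁽³⁾, x⁽⁴⁾ and a⁽¹⁾, a⁽³⁾, a⁽⁴⁾ via the linear changes of variables a⁽¹⁾ ↦ a⁽¹⁾ and completing squares, related by an invertible linear change of variables to a⁽²⁾·(x⁽⁵⁾−x⁽¹⁾) plus a sum of products of pairs of fresh variables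 (a 'Knörrer' quadratic form). -/
open MvPolynomial

noncomputable section

set_option synthInstance.maxHeartbeats 1000000
set_option maxHeartbeats 1000000

/-- Variable set: `x⁽¹⁾,…,x⁽⁵⁾` (via `Sum.inl`) and `a⁽¹⁾,…,a⁽⁴⁾` (via `Sum.inr`),
each a list of `n` variables. -/
abbrev V17 (n : ℕ) : Type := (Fin 5 ⊕ Fin 4) × Fin n

abbrev P17 (n : ℕ) : Type := MvPolynomial (V17 n) ℂ

/-- `x⁽ᵏ⁾ᵢ`. -/
def xv (n : ℕ) (k : Fin 5) (i : Fin n) : P17 n := X (Sum.inl k, i)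

/-- `a⁽ʲ⁾ᵢ`. -/
def av (n : ℕ) (j : Fin 4) (i : Fin n) : P17 n := X (Sum.inr j, i)

/-- The Zorro-movie superpotential
`a⁽¹⁾·(x⁽²⁾−x⁽¹⁾) + a⁽²⁾·(x⁽⁴⁾−x⁽³⁾) + a⁽³⁾·(x⁽⁵⁾−x⁽⁴⁾) + a⁽⁴⁾·(x⁽³⁾−x⁽²⁾)`. -/
def W17 (n : ℕ) : P17 n :=
  ∑ i : Fin n,
    (av n 0 i * (xv n 1 i - xv n 0 i) + av n 1 i * (xv n 3 i - xv n 2 i) +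
      av n 2 i * (xv n 4 i - xv n 3 i) + av n 3 i * (xv n 2 i - xv n 1 i))

/-- The target superpotential `a⁽²⁾·(x⁽⁵⁾−x⁽¹⁾)` plus a sum of products of pairs of
fresh variables (a 'Knörrer' quadratic form), the pairs being
`(a⁽¹⁾ᵢ, x⁽²⁾ᵢ), (a⁽³⁾ᵢ, x⁽⁴⁾ᵢ), (a⁽⁴⁾ᵢ, x⁽³⁾ᵢ)`. -/
def W17' (n : ℕ) : P17 n :=
  (∑ i : Fin n, av n 1 i * (xv n 4 i - xv n 0 i)) +
    ∑ i : Fin n, (av n 0 i * xv n 1 i + av n 2 i * xv n 3 i + av n 3 i * xv n 2 i)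

section Substitution

variable {R σ : Type*} [CommSemiring R]

def substAlgEquiv (f g : σ → MvPolynomial σ R) (hgf : ∀ v, aeval g (f v) = X v)
    (hfg : ∀ v, aeval f (g v) = X v) : MvPolynomial σ R ≃ₐ[R] MvPolynomial σ R :=
  AlgEquiv.ofAlgHom (aeval f) (aeval g)
    (algHom_ext fun v => by simpa only [AlgHom.comp_apply, AlgHom.id_apply, aeval_X] using hfg v)
    (algHom_ext fun v => by simpa only [AlgHom.comp_apply, AlgHom.id_apply, aeval_X] using hgf v)

theorem substAlgEquiv_apply (f g : σ → MvPolynomial σ R) (hgf : ∀ v, aeval g (f v) = X v)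
    (hfg : ∀ v, aeval f (g v) = X v) (p : MvPolynomial σ R) :
    substAlgEquiv f g hgf hfg p = aeval f p :=
  rfl

end Substitution

/-- Obtained by solving `x⁽²⁾−x⁽¹⁾ ↦ x⁽²⁾`, `x⁽³⁾−x⁽²⁾ ↦ x⁽³⁾`, `x⁽⁵⁾−x⁽⁴⁾ ↦ x⁽⁴⁾`,
`x⁽⁴⁾−x⁽³⁾ ↦ x⁽⁵⁾−x⁽¹⁾` with `x⁽¹⁾` and the `a⁽ʲ⁾` fixed, so that substituting it turns each
bracket of `W17` into a bracket of `W17'`. -/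
def zorroSubst (n : ℕ) : V17 n → P17 n
  | (Sum.inl k, i) =>
    ![xv n 0 i, xv n 0 i + xv n 1 i, xv n 0 i + xv n 1 i + xv n 2 i,
      xv n 1 i + xv n 2 i + xv n 4 i, xv n 1 i + xv n 2 i + xv n 3 i + xv n 4 i] k
  | (Sum.inr j, i) => av n j i

def zorroSubstInv (n : ℕ) : V17 n → P17 n
  | (Sum.inl k, i) =>
    ![xv n 0 i, xv n 1 i - xv n 0 i, xv n 2 i - xv n 1 i, xv n 4 i - xv n 3 i,
      xv n 0 i + xv n 3 i - xv n 2 i] k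
  | (Sum.inr j, i) => av n j i

theorem aeval_zorroSubstInv_zorroSubst (n : ℕ) (v : V17 n) :
    aeval (zorroSubstInv n) (zorroSubst n v) = X v := by
  obtain ⟨k | j, i⟩ := v
  · fin_cases k <;>
      simp only [zorroSubst, zorroSubstInv, xv, Fin.isValue, Fin.zero_eta, Fin.mk_one,
        Fin.reduceFinMk, Matrix.cons_val, Matrix.cons_val_zero, Matrix.cons_val_one,
        map_add, aeval_X] <;>
      ring
  · simp [zorroSubst, zorroSubstInv, av]

theorem aeval_zorroSubst_zorroSubstInv (n : ℕ) (v : V17 n) :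
    aeval (zorroSubst n) (zorroSubstInv n v) = X v := by
  obtain ⟨k | j, i⟩ := v
  · fin_cases k <;>
      simp only [zorroSubst, zorroSubstInv, xv, Fin.isValue, Fin.zero_eta, Fin.mk_one,
        Fin.reduceFinMk, Matrix.cons_val, Matrix.cons_val_zero, Matrix.cons_val_one,
        map_add, map_sub, aeval_X] <;>
      ring
  · simp [zorroSubst, zorroSubstInv, av]

theorem zorroSubst_mem_span_range_X (n : ℕ) (v : V17 n) :
    zorroSubst n v ∈ Submodule.span ℂ (Set.range (X : V17 n → P17 n)) := by
  have mem_X (w : V17 n) : (X w : P17 n) ∈ Submodule.span ℂ (Set.range X) :=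
    Submodule.subset_span ⟨w, rfl⟩
  obtain ⟨k | j, i⟩ := v
  · fin_cases k <;> simp only [zorroSubst, xv] <;> apply_rules [add_mem, mem_X]
  · exact mem_X _

theorem aeval_zorroSubst_W17 (n : ℕ) : aeval (zorroSubst n) (W17 n) = W17' n := by
  rw [W17, W17', map_sum, ← Finset.sum_add_distrib]
  refine Finset.sum_congr rfl fun i _ => ?_
  simp only [zorroSubst, xv, av, Fin.isValue, Matrix.cons_val, Matrix.cons_val_zero,
    Matrix.cons_val_one, map_add, map_sub, map_mul, aeval_X]
  ring

/-- The Zorro-movie computation: after eliminating the intermediate variables by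
completing squares, the superpotential of the composite
`(ev_x ⊠ 1_x) ∘ (1_x ⊠ coev_x)` is related to `a⁽²⁾·(x⁽⁵⁾−x⁽¹⁾)` plus a Knörrer
quadratic form by an invertible linear change of variables:  there is a `ℂ`-algebra
automorphism `φ` of the polynomial ring sending each variable to a linear form
(degree-1 polynomial in the span of the variables) with `φ(W) = W'`. -/
theorem zorro_linear_change_of_variables (n : ℕ) :
    ∃ φ : P17 n ≃ₐ[ℂ] P17 n,
      (∀ v : V17 n, φ (X v) ∈ Submodule.span ℂ (Set.range (X : V17 n → P17 n))) ∧
      φ (W17 n) = W17' n := by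
  refine ⟨substAlgEquiv (zorroSubst n) (zorroSubstInv n) (aeval_zorroSubstInv_zorroSubst n)
    (aeval_zorroSubst_zorroSubstInv n), fun v => ?_, aeval_zorroSubst_W17 n⟩
  rw [substAlgEquiv_apply, aeval_X]
  exact zorroSubst_mem_span_range_X n v

end
end
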